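/- arXiv:2008.10539 — 9 statements merged into one kernel-verified Lean document; each statement's English description precedes it below -/
import Mathlib

section
/- Let ρ and θ be congruences on a regular semigroup S. Then the trace of ρ is contained in the trace of θ if and only if ρ_t ⊆ θ, where ρ_t is the least congruence on S with the same trace as ρ. -/
/-- For congruences `ρ`, `θ` on a regular semigroup `S`,
`tr ρ ⊆ tr θ` iff `ρ_t ≤ θ`, where `ρ_t` is the least congruence with the
same trace as `ρ`. -/
theorem stmt_1 {S : Type*} [Semigroup S]
    (hreg : ∀ a : S, ∃ a', a * a' * a = a ∧ a' * a * a' = a')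
    (ρ θ ρt : Con S)
    (hρt_tr : ∀ e f : S, e * e = e → f * f = f → (ρt e f ↔ ρ e f))
    (hρt_least : ∀ c : Con S,
      (∀ e f : S, e * e = e → f * f = f → (c e f ↔ ρ e f)) → ρt ≤ c) :
    (∀ e f : S, e * e = e → f * f = f → ρ e f → θ e f) ↔ ρt ≤ θ := by
  constructor
  · intro h
    have hle : ρt ≤ ρt ⊓ θ := by
      apply hρt_least
      intro e f he hf
      rw [Con.inf_iff_and, hρt_tr e f he hf]
      exact ⟨fun ⟨h1, _⟩ => h1, fun h1 => ⟨h1, h e f he hf h1⟩⟩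
    exact le_trans hle inf_le_right
  · intro h e f he hf hef
    exact h ((hρt_tr e f he hf).mpr hef)
end

section
/- Let ρ and θ be congruences on a regular semigroup S. Then the kernel of ρ is contained in the kernel of θ if and only if ρ_k ⊆ θ, where ρ_k is the least congruence on S with the same kernel as ρ. -/
/-- For congruences `ρ`, `θ` on a regular semigroup `S`,
`ker ρ ⊆ ker θ` iff `ρ_k ≤ θ`, where `ρ_k` is the least congruence with the
same kernel as `ρ`. -/
theorem stmt_2 {S : Type*} [Semigroup S]
    (hreg : ∀ a : S, ∃ a', a * a' * a = a ∧ a' * a * a' = a')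
    (ρ θ ρk : Con S)
    (hρk_ker : ∀ a : S,
      (∃ e, e * e = e ∧ ρk a e) ↔ (∃ e, e * e = e ∧ ρ a e))
    (hρk_least : ∀ c : Con S,
      (∀ a : S, (∃ e, e * e = e ∧ c a e) ↔ (∃ e, e * e = e ∧ ρ a e)) → ρk ≤ c) :
    (∀ a : S, (∃ e, e * e = e ∧ ρ a e) → (∃ e, e * e = e ∧ θ a e)) ↔ ρk ≤ θ := by
  constructor
  · intro H
    refine le_trans (hρk_least (ρk ⊓ θ) ?_) inf_le_right
    intro a
    constructor
    · rintro ⟨e, he, hce⟩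
      exact (hρk_ker a).1 ⟨e, he, hce.1⟩
    · rintro ⟨e, he, hρe⟩
      obtain ⟨f, hf, hρkf⟩ := (hρk_ker a).2 ⟨e, he, hρe⟩
      have h1 : ρk a (a * a) := by
        have h := ρk.mul hρkf hρkf
        rw [hf] at h
        exact ρk.trans hρkf (ρk.symm h)
      obtain ⟨g, hg, hθg⟩ := H a ⟨e, he, hρe⟩
      have h2 : θ a (a * a) := by
        have h := θ.mul hθg hθg
        rw [hg] at h
        exact θ.trans hθg (θ.symm h)
      have hca : (ρk ⊓ θ) a (a * a) := ⟨h1, h2⟩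
      obtain ⟨x, hx1, hx2⟩ := hreg (a * a)
      refine ⟨a * x * a, ?_, ?_⟩
      · calc a * x * a * (a * x * a) = a * (x * (a * a) * x) * a := by
              simp [mul_assoc]
          _ = a * x * a := by rw [hx2]
      · have h3 : (ρk ⊓ θ) (a * a) ((a * a) * x * (a * a)) := by
          rw [hx1]; exact (ρk ⊓ θ).refl _
        have h5 : (ρk ⊓ θ) (a * x * a) ((a * a) * x * (a * a)) :=
          (ρk ⊓ θ).mul ((ρk ⊓ θ).mul hca ((ρk ⊓ θ).refl x)) hca
        exact (ρk ⊓ θ).trans ((ρk ⊓ θ).trans hca h3) ((ρk ⊓ θ).symm h5)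
  · rintro H a ⟨e, he, hρe⟩
    obtain ⟨f, hf, hρkf⟩ := (hρk_ker a).2 ⟨e, he, hρe⟩
    exact ⟨f, hf, H hρkf⟩
end

section
/- Let ρ ⊆ θ be congruences on a regular semigroup S. Then (θ/ρ)_t = (ρ ∨ θ_t)/ρ as congruences on S/ρ, where the subscript t denotes the least congruence with the same trace. -/
/-- Lallement's lemma: in a regular semigroup, any `ρ`-class that is idempotent
modulo `ρ` contains an element `ρ`-related to an actual idempotent. -/
theorem lallement {S : Type*} [Semigroup S]
    (hreg : ∀ a : S, ∃ a', a * a' * a = a ∧ a' * a * a' = a')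
    (ρ : Con S) (a : S) (h : ρ (a * a) a) :
    ∃ e : S, e * e = e ∧ ρ e a := by
  obtain ⟨x, hx1, hx2⟩ := hreg (a * a)
  refine ⟨a * x * a, ?_, ?_⟩
  · calc a * x * a * (a * x * a) = a * (x * (a * a) * x) * a := by
          simp only [mul_assoc]
      _ = a * x * a := by rw [hx2]
  · have h1 : ρ (a * x * a) (a * a * x * (a * a)) :=
      ρ.mul (ρ.mul (ρ.symm h) (ρ.refl x)) (ρ.symm h)
    rw [hx1] at h1
    exact ρ.trans h1 h

/-- For congruences `ρ ≤ θ` on a regular semigroup `S`,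
`(θ/ρ)_t = (ρ ∨ θ_t)/ρ` as congruences on `S/ρ`. -/
theorem stmt_5 {S : Type*} [Semigroup S]
    (hreg : ∀ a : S, ∃ a', a * a' * a = a ∧ a' * a * a' = a')
    (ρ θ θt : Con S) (hρθ : ρ ≤ θ)
    -- `θt` is the least congruence on `S` with the same trace as `θ`
    (hθt_tr : ∀ e f : S, e * e = e → f * f = f → (θt e f ↔ θ e f))
    (hθt_least : ∀ c : Con S,
      (∀ e f : S, e * e = e → f * f = f → (c e f ↔ θ e f)) → θt ≤ c)
    (q q2 qt : Con ρ.Quotient)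
    -- `q` is the quotient congruence `θ/ρ`
    (hq : ∀ x y : S, q (x : ρ.Quotient) (y : ρ.Quotient) ↔ θ x y)
    -- `q2` is the quotient congruence `(ρ ⊔ θt)/ρ`
    (hq2 : ∀ x y : S, q2 (x : ρ.Quotient) (y : ρ.Quotient) ↔ (ρ ⊔ θt) x y)
    -- `qt` is the least congruence on `S/ρ` with the same trace as `q`
    (hqt_tr : ∀ u v : ρ.Quotient, u * u = u → v * v = v → (qt u v ↔ q u v))
    (hqt_least : ∀ c : Con ρ.Quotient,
      (∀ u v : ρ.Quotient, u * u = u → v * v = v → (c u v ↔ q u v)) → qt ≤ c) :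
    qt = q2 := by
  have hθtθ : θt ≤ θ := hθt_least θ (fun e f _ _ => Iff.rfl)
  have hsupθ : ρ ⊔ θt ≤ θ := sup_le hρθ hθtθ
  apply le_antisymm
  · -- qt ≤ q2 : q2 has the same trace as q
    apply hqt_least
    intro u v hu hv
    obtain ⟨x, rfl⟩ := Quotient.exists_rep (s := ρ.toSetoid) u
    obtain ⟨y, rfl⟩ := Quotient.exists_rep (s := ρ.toSetoid) v
    have hx : ρ (x * x) x := ρ.eq.mp ((ρ.coe_mul x x).symm.trans hu)
    have hy : ρ (y * y) y := ρ.eq.mp ((ρ.coe_mul y y).symm.trans hv)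
    show q2 (x : ρ.Quotient) (y : ρ.Quotient) ↔ q (x : ρ.Quotient) (y : ρ.Quotient)
    rw [hq2, hq]
    constructor
    · intro h
      exact hsupθ h
    · intro h
      obtain ⟨e, he, hex⟩ := lallement hreg ρ x hx
      obtain ⟨f, hf, hfy⟩ := lallement hreg ρ y hy
      have hef : θ e f := θ.trans (hρθ hex) (θ.trans h (θ.symm (hρθ hfy)))
      have h2 : (ρ ⊔ θt) e f := le_sup_right (a := ρ) ((hθt_tr e f he hf).mpr hef)
      exact (ρ ⊔ θt).trans ((ρ ⊔ θt).trans ((ρ ⊔ θt).symm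
        (le_sup_left (a := ρ) (b := θt) hex)) h2) (le_sup_left (a := ρ) (b := θt) hfy)
  · -- q2 ≤ qt
    set c : Con S := Con.comap (fun x => (x : ρ.Quotient))
      (fun x y => Con.coe_mul x y) qt with hc
    have hρc : ρ ≤ c := by
      intro x y hxy
      show qt (x : ρ.Quotient) (y : ρ.Quotient)
      rw [ρ.eq.mpr hxy]
      exact qt.refl _
    have hθtc : θt ≤ c := by
      apply hθt_least
      intro e f he hf
      have heq : ((e : ρ.Quotient) * e = e) := by rw [← Con.coe_mul, he]
      have hfq : ((f : ρ.Quotient) * f = f) := by rw [← Con.coe_mul, hf]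
      show qt (e : ρ.Quotient) (f : ρ.Quotient) ↔ θ e f
      rw [hqt_tr _ _ heq hfq, hq]
    have hsupc : ρ ⊔ θt ≤ c := sup_le hρc hθtc
    intro u v huv
    obtain ⟨x, rfl⟩ := Quotient.exists_rep (s := ρ.toSetoid) u
    obtain ⟨y, rfl⟩ := Quotient.exists_rep (s := ρ.toSetoid) v
    have : (ρ ⊔ θt) x y := (hq2 x y).mp huv
    exact hsupc this
end

section
/- Let ρ be a congruence on an inverse semigroup S. If every idempotent ρ-class eρ (e ∈ E_S) is a Clifford semigroup, then ρ satisfies the implication: x² ρ x and e ∈ E_S imply xe = ex, i.e., every element of ker ρ commutes with all idempotents of S. -/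
/-- If every idempotent `ρ`-class of a congruence `ρ` on an
inverse semigroup is a Clifford semigroup (its idempotents are central in it),
then `x² ρ x` and `e` idempotent imply `x * e = e * x`. -/
theorem stmt_11 {S : Type*} [Semigroup S] (inv : S → S)
    (hinv1 : ∀ a : S, a * inv a * a = a)
    (hinv2 : ∀ a : S, inv a * a * inv a = inv a)
    (hcomm : ∀ e f : S, e * e = e → f * f = f → e * f = f * e)
    (ρ : Con S)
    (hcliff : ∀ e : S, e * e = e →
      ∀ f : S, ρ f e → f * f = f → ∀ x : S, ρ x e → x * f = f * x) :
    ∀ x : S, ρ (x * x) x → ∀ e : S, e * e = e → x * e = e * x := by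
  -- Lallement: each idempotent class contains an idempotent
  have hIdem : ∀ a : S, ρ (a*a) a → ∃ f : S, f*f = f ∧ ρ a f := by
    intro a hk
    refine ⟨a * inv (a*a) * a, ?_, ?_⟩
    · set u := inv (a*a) with hu
      have h2 : u * (a*a) * u = u := hinv2 (a*a)
      calc (a*u*a)*(a*u*a) = a*(u*(a*a)*u)*a := by simp [mul_assoc]
        _ = a*u*a := by rw [h2]
    · set u := inv (a*a) with hu
      have h1 : ρ a (a*a) := ρ.symm hk
      have h2 : ρ (a*(u*a)) ((a*a)*(u*(a*a))) := ρ.mul h1 (ρ.mul (ρ.refl u) h1)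
      have h3 : (a*a)*(u*(a*a)) = a*a := by rw [← mul_assoc]; exact hinv1 (a*a)
      have h4 : ρ (a*(u*a)) (a*a) := h3 ▸ h2
      have h5 : ρ (a*u*a) a := by
        rw [mul_assoc]; exact ρ.trans h4 hk
      exact ρ.symm h5
  -- MAIN: any element of ker ρ commutes with any of its inverses
  have main : ∀ a a' : S, a * a' * a = a → a' * a * a' = a' → ρ (a*a) a →
      a * a' = a' * a := by
    intro a a' ha1 ha2 hk
    obtain ⟨f, hf, haf⟩ := hIdem a hk
    have hia : (a'*a)*(a'*a) = a'*a := by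
      calc (a'*a)*(a'*a) = a'*(a*a'*a) := by simp [mul_assoc]
        _ = a'*a := by rw [ha1]
    have hia' : (a*a')*(a*a') = a*a' := by
      calc (a*a')*(a*a') = (a*a'*a)*a' := by simp [mul_assoc]
        _ = a*a' := by rw [ha1]
    -- L1 : ρ (a'*a) a
    have hL1 : ρ (a'*a) a := by
      have s0 : ρ (a'*a) ((a'*a)*a) := by
        have : ρ ((a'*a)*a) (a'*a) := by
          rw [mul_assoc]; exact ρ.mul (ρ.refl a') hk
        exact ρ.symm this
      have s1 : ρ ((a'*a)*a) ((a'*a)*f) := ρ.mul (ρ.refl _) haf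
      have s2 : (a'*a)*f = f*(a'*a) := hcomm _ _ hia hf
      have s3 : ρ (f*(a'*a)) (a*(a'*a)) := ρ.mul (ρ.symm haf) (ρ.refl _)
      have s4 : a*(a'*a) = a := by rw [← mul_assoc]; exact ha1
      have s5 : ρ (f*(a'*a)) a := by have := s3; rwa [s4] at this
      have s6 : ρ ((a'*a)*f) a := by rw [s2]; exact s5
      exact ρ.trans s0 (ρ.trans s1 s6)
    -- L2 : ρ (a*a') a
    have hL2 : ρ (a*a') a := by
      have s0 : ρ (a*a') (a*(a*a')) := by
        have : ρ (a*(a*a')) (a*a') := by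
          rw [← mul_assoc]; exact ρ.mul hk (ρ.refl a')
        exact ρ.symm this
      have s1 : ρ (a*(a*a')) (f*(a*a')) := ρ.mul haf (ρ.refl _)
      have s2 : f*(a*a') = (a*a')*f := hcomm _ _ hf hia'
      have s3 : ρ ((a*a')*f) ((a*a')*a) := ρ.mul (ρ.refl _) (ρ.symm haf)
      have s4 : (a*a')*a = a := ha1
      have s5 : ρ ((a*a')*f) a := by have := s3; rwa [s4] at this
      have s6 : ρ (f*(a*a')) a := by rw [s2]; exact s5
      exact ρ.trans s0 (ρ.trans s1 s6)
    have hB : a * (a'*a) = (a'*a) * a :=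
      hcliff f hf (a'*a) (ρ.trans hL1 haf) hia a haf
    have hBB : (a'*a)*a = a := by
      rw [← hB, ← mul_assoc]; exact ha1
    have hA : a * (a*a') = (a*a') * a :=
      hcliff f hf (a*a') (ρ.trans hL2 haf) hia' a haf
    have hAA : a*(a*a') = a := by rw [hA]; exact ha1
    calc a*a' = ((a'*a)*a)*a' := by rw [hBB]
      _ = (a'*a)*(a*a') := by rw [mul_assoc]
      _ = a'*(a*(a*a')) := by rw [mul_assoc]
      _ = a'*a := by rw [hAA]
  -- the theorem
  intro x hx e he
  set x' := inv x with hx'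
  have hxx0 : x*(x'*x) = x := by rw [← mul_assoc]; exact hinv1 x
  have hx'x0 : x'*(x*x') = x' := by rw [← mul_assoc]; exact hinv2 x
  have hmx : x * x' = x' * x := main x x' (hinv1 x) (hinv2 x) hx
  have hgg : (x*x')*(x*x') = x*x' := by
    calc (x*x')*(x*x') = (x*x'*x)*x' := by simp [mul_assoc]
      _ = x*x' := by rw [hinv1]
  have hge : (x*x')*e = e*(x*x') := hcomm _ _ hgg he
  -- pointwise helpers
  have he' : ∀ y : S, e*(e*y) = e*y := fun y => by rw [← mul_assoc, he]
  have hxx' : ∀ y : S, x*(x'*(x*y)) = x*y := fun y => by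
    rw [← mul_assoc, ← mul_assoc, hinv1]
  have hx'x : ∀ y : S, x'*(x*(x'*y)) = x'*y := fun y => by
    rw [← mul_assoc, ← mul_assoc, hinv2]
  have hcm : ∀ y : S, x*(x'*(e*y)) = e*(x*(x'*y)) := fun y => by
    rw [← mul_assoc, ← mul_assoc, hge, mul_assoc, mul_assoc]
  have hcm' : ∀ y : S, e*(x*(x'*y)) = x*(x'*(e*y)) := fun y => (hcm y).symm
  -- e*x is in ker ρ with inverse x'*e
  have hc1 : (e*x)*(x'*e)*(e*x) = e*x := by
    simp only [mul_assoc]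
    rw [he', hcm x, he', hxx0]
  have hc2 : (x'*e)*(e*x)*(x'*e) = x'*e := by
    simp only [mul_assoc]
    rw [he', hcm' e, he, hx'x e]
  have hcc : ρ ((e*x)*(e*x)) (e*x) := by
    obtain ⟨f, hf, haf⟩ := hIdem x hx
    have hef : e*f = f*e := hcomm e f he hf
    have t1 : ρ ((e*x)*(e*x)) ((e*f)*(e*f)) :=
      ρ.mul (ρ.mul (ρ.refl e) haf) (ρ.mul (ρ.refl e) haf)
    have t2 : (e*f)*(e*f) = e*f := by
      calc (e*f)*(e*f) = e*((f*e)*f) := by simp [mul_assoc]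
        _ = e*((e*f)*f) := by rw [← hef]
        _ = (e*e)*(f*f) := by simp [mul_assoc]
        _ = e*f := by rw [he, hf]
    have t3 : ρ (e*f) (e*x) := ρ.mul (ρ.refl e) (ρ.symm haf)
    have t4 : ρ ((e*f)*(e*f)) (e*x) := by rw [t2]; exact t3
    exact ρ.trans t1 t4
  have hI : (e*x)*(x'*e) = (x'*e)*(e*x) := main (e*x) (x'*e) hc1 hc2 hcc
  -- simplify hI to: e*(x*x') = x'*(e*x)
  have hIL : (e*x)*(x'*e) = e*(x*x') := by
    calc (e*x)*(x'*e) = e*(x*(x'*e)) := by simp [mul_assoc]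
      _ = e*((x*x')*e) := by rw [mul_assoc]
      _ = e*(e*(x*x')) := by rw [hge]
      _ = e*(x*x') := he' _
  have hIR : (x'*e)*(e*x) = x'*(e*x) := by
    calc (x'*e)*(e*x) = x'*(e*(e*x)) := by simp [mul_assoc]
      _ = x'*(e*x) := by rw [he']
  have hKey : e*(x*x') = x'*(e*x) := by rw [← hIL, ← hIR, hI]
  calc x*e = (x*(x'*x))*e := by rw [hxx0]
    _ = (x*(x*x'))*e := by rw [hmx]
    _ = x*((x*x')*e) := by rw [mul_assoc]
    _ = x*(e*(x*x')) := by rw [hge]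
    _ = x*(x'*(e*x)) := by rw [hKey]
    _ = (x*x')*(e*x) := by simp [mul_assoc]
    _ = ((x*x')*e)*x := by simp [mul_assoc]
    _ = (e*(x*x'))*x := by rw [hge]
    _ = e*((x*x')*x) := by rw [mul_assoc]
    _ = e*x := by rw [hinv1]
end

section
/- Let ρ be a congruence on an inverse semigroup S and e an idempotent. Then the kernel of the least group congruence σ on the subsemigroup eρ equals the ρ_t-class of e, where ρ_t is the least congruence on S with the same trace as ρ. That is, ker σ_{eρ} = e ρ_t. -/
namespace Stmt12Aux

variable {S : Type*} [Semigroup S]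

/-- Uniqueness of inverses in a semigroup with commuting idempotents. -/
theorem unique_inv (hcomm : ∀ e f : S, e * e = e → f * f = f → e * f = f * e)
    {a x y : S} (hx1 : a * x * a = a) (hx2 : x * a * x = x)
    (hy1 : a * y * a = a) (hy2 : y * a * y = y) : x = y := by
  have eax : (a*x) * (a*x) = a*x := by
    rw [mul_assoc a x (a*x), ← mul_assoc x a x, hx2]
  have eay : (a*y) * (a*y) = a*y := by
    rw [mul_assoc a y (a*y), ← mul_assoc y a y, hy2]
  have exa : (x*a) * (x*a) = x*a := by
    rw [mul_assoc x a (x*a), ← mul_assoc a x a, hx1]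
  have eya : (y*a) * (y*a) = y*a := by
    rw [mul_assoc y a (y*a), ← mul_assoc a y a, hy1]
  have h1 : x = y * a * x := by
    calc x = x*a*x := hx2.symm
    _ = x*(a*y*a)*x := by rw [hy1]
    _ = ((x*a)*(y*a))*x := by simp only [mul_assoc]
    _ = ((y*a)*(x*a))*x := by rw [hcomm _ _ exa eya]
    _ = (y*a)*(x*a*x) := by simp only [mul_assoc]
    _ = y*a*x := by rw [hx2, mul_assoc]
  have h2 : y = y * a * x := by
    calc y = y*a*y := hy2.symm
    _ = y*(a*x*a)*y := by rw [hx1]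
    _ = y*((a*x)*(a*y)) := by simp only [mul_assoc]
    _ = y*((a*y)*(a*x)) := by rw [hcomm _ _ eax eay]
    _ = (y*a*y)*(a*x) := by simp only [mul_assoc]
    _ = y*a*x := by rw [hy2, mul_assoc]
  rw [h1, ← h2]

variable (inv : S → S)

theorem idem_ii (hinv1 : ∀ a : S, a * inv a * a = a) (a : S) :
    (inv a * a) * (inv a * a) = inv a * a := by
  rw [mul_assoc (inv a) a (inv a * a), ← mul_assoc a (inv a) a, hinv1]

theorem idem_i' (hinv2 : ∀ a : S, inv a * a * inv a = inv a) (a : S) :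
    (a * inv a) * (a * inv a) = a * inv a := by
  rw [mul_assoc a (inv a) (a * inv a), ← mul_assoc (inv a) a (inv a), hinv2]

theorem idem_mul (hcomm : ∀ e f : S, e * e = e → f * f = f → e * f = f * e)
    {f g : S} (hf : f * f = f) (hg : g * g = g) : (f * g) * (f * g) = f * g := by
  rw [mul_assoc f g (f*g), ← mul_assoc g f g, hcomm g f hg hf, mul_assoc f g g,
    hg, ← mul_assoc f f g, hf]

theorem idem_inv (hinv1 : ∀ a : S, a * inv a * a = a)
    (hinv2 : ∀ a : S, inv a * a * inv a = inv a)
    (hcomm : ∀ e f : S, e * e = e → f * f = f → e * f = f * e)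
    {e : S} (he : e * e = e) : inv e = e :=
  unique_inv hcomm (hinv1 e) (hinv2 e) (by rw [he, he]) (by rw [he, he])

/-- A congruence respects inverses. -/
theorem con_inv (hinv1 : ∀ a : S, a * inv a * a = a)
    (hinv2 : ∀ a : S, inv a * a * inv a = inv a)
    (hcomm : ∀ e f : S, e * e = e → f * f = f → e * f = f * e)
    (ρ : Con S) {a b : S} (h : ρ a b) : ρ (inv a) (inv b) := by
  have haa' := idem_i' inv hinv2 a
  have hbb' := idem_i' inv hinv2 b
  have haa := idem_ii inv hinv1 a
  have hbb := idem_ii inv hinv1 b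
  have s1 : ρ (inv b) ((inv b * a) * inv b) := by
    have := ρ.mul (ρ.mul (ρ.refl (inv b)) (ρ.symm h)) (ρ.refl (inv b))
    rwa [hinv2 b] at this
  have s2 : ρ ((inv b * a) * inv b) (inv b * (a * inv a)) := by
    have e1 : (inv b * a) * inv b = (inv b * ((a * inv a) * a)) * inv b := by
      conv_lhs => rw [← hinv1 a]
    have step : ρ ((inv b * ((a * inv a) * a)) * inv b)
        ((inv b * ((a * inv a) * b)) * inv b) :=
      ρ.mul (ρ.mul (ρ.refl _) (ρ.mul (ρ.refl _) h)) (ρ.refl _)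
    have e2 : (inv b * ((a * inv a) * b)) * inv b = inv b * (a * inv a) := by
      calc (inv b * ((a * inv a) * b)) * inv b
          = inv b * ((a * inv a) * (b * inv b)) := by simp only [mul_assoc]
        _ = inv b * ((b * inv b) * (a * inv a)) := by rw [hcomm _ _ haa' hbb']
        _ = (inv b * b * inv b) * (a * inv a) := by simp only [mul_assoc]
        _ = inv b * (a * inv a) := by rw [hinv2]
    rw [e1]
    exact e2 ▸ step
  have s3 : ρ (inv b * (a * inv a)) ((inv b * b) * inv a) := by
    have := ρ.mul (ρ.refl (inv b)) (ρ.mul h (ρ.refl (inv a)))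
    rwa [← mul_assoc (inv b) b (inv a)] at this
  have s4 : ρ (inv a) ((inv a * b) * inv a) := by
    have := ρ.mul (ρ.mul (ρ.refl (inv a)) h) (ρ.refl (inv a))
    rwa [hinv2 a] at this
  have s5 : ρ ((inv a * b) * inv a) ((inv b * b) * inv a) := by
    have e1 : (inv a * b) * inv a = (inv a * ((b * inv b) * b)) * inv a := by
      conv_lhs => rw [← hinv1 b]
    have step : ρ ((inv a * ((b * inv b) * b)) * inv a)
        ((inv a * ((a * inv b) * b)) * inv a) :=
      ρ.mul (ρ.mul (ρ.refl _) (ρ.mul (ρ.mul (ρ.symm h) (ρ.refl _)) (ρ.refl _))) (ρ.refl _)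
    have e2 : (inv a * ((a * inv b) * b)) * inv a = (inv b * b) * inv a := by
      calc (inv a * ((a * inv b) * b)) * inv a
          = ((inv a * a) * (inv b * b)) * inv a := by simp only [mul_assoc]
        _ = ((inv b * b) * (inv a * a)) * inv a := by rw [hcomm _ _ haa hbb]
        _ = (inv b * b) * ((inv a * a) * inv a) := by simp only [mul_assoc]
        _ = (inv b * b) * inv a := by rw [hinv2]
    rw [e1]
    exact e2 ▸ step
  exact ρ.symm (ρ.trans (ρ.trans (ρ.trans s1 s2) s3) (ρ.symm (ρ.trans s4 s5)))

theorem con_invmul (hinv1 : ∀ a : S, a * inv a * a = a)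
    (hinv2 : ∀ a : S, inv a * a * inv a = inv a)
    (hcomm : ∀ e f : S, e * e = e → f * f = f → e * f = f * e)
    (ρ : Con S) {a b : S} (h : ρ a b) : ρ (inv a * a) (inv b * b) :=
  ρ.mul (con_inv inv hinv1 hinv2 hcomm ρ h) h

/-- `x * (inv x * (g * x)) = g * x` for an idempotent `g`. -/
theorem sand_inner (hinv1 : ∀ a : S, a * inv a * a = a)
    (hcomm : ∀ e f : S, e * e = e → f * f = f → e * f = f * e)
    (hinv2 : ∀ a : S, inv a * a * inv a = inv a)
    {g : S} (hg : g * g = g) (x : S) : x * (inv x * (g * x)) = g * x := by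
  calc x * (inv x * (g * x)) = ((x * inv x) * g) * x := by simp only [mul_assoc]
    _ = (g * (x * inv x)) * x := by rw [hcomm _ _ (idem_i' inv hinv2 x) hg]
    _ = g * ((x * inv x) * x) := by simp only [mul_assoc]
    _ = g * x := by rw [mul_assoc x (inv x) x] at *; rw [← mul_assoc x (inv x) x, hinv1]

/-- `inv x * (g * x)` is idempotent whenever `g` is. -/
theorem sand_idem (hinv1 : ∀ a : S, a * inv a * a = a)
    (hinv2 : ∀ a : S, inv a * a * inv a = inv a)
    (hcomm : ∀ e f : S, e * e = e → f * f = f → e * f = f * e)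
    {g : S} (hg : g * g = g) (x : S) :
    (inv x * (g * x)) * (inv x * (g * x)) = inv x * (g * x) := by
  calc (inv x * (g * x)) * (inv x * (g * x))
      = inv x * (g * (x * (inv x * (g * x)))) := by simp only [mul_assoc]
    _ = inv x * (g * (g * x)) := by rw [sand_inner inv hinv1 hcomm hinv2 hg x]
    _ = inv x * ((g * g) * x) := by rw [mul_assoc g g x]
    _ = inv x * (g * x) := by rw [hg]

end Stmt12Aux
namespace Stmt12Aux

section
variable {S : Type*} [Semigroup S]

/-- The least congruence with the same trace as `ρ`. -/
def rel (inv : S → S) (ρ : Con S) (a b : S) : Prop :=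
  ρ a b ∧ ∃ f, f * f = f ∧ ρ f (inv a * a) ∧ a * f = b * f

theorem rel_refl (inv : S → S) (hinv1 : ∀ a : S, a * inv a * a = a)
    (ρ : Con S) (a : S) : rel inv ρ a a :=
  ⟨ρ.refl a, inv a * a, idem_ii inv hinv1 a, ρ.refl _, rfl⟩

theorem rel_symm (inv : S → S) (hinv1 : ∀ a : S, a * inv a * a = a)
    (hinv2 : ∀ a : S, inv a * a * inv a = inv a)
    (hcomm : ∀ e f : S, e * e = e → f * f = f → e * f = f * e)
    (ρ : Con S) {a b : S} (h : rel inv ρ a b) : rel inv ρ b a := by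
  obtain ⟨hab, f, hff, hfρ, haf⟩ := h
  exact ⟨ρ.symm hab, f, hff,
    ρ.trans hfρ (con_invmul inv hinv1 hinv2 hcomm ρ hab), haf.symm⟩

theorem rel_trans (inv : S → S) (hinv1 : ∀ a : S, a * inv a * a = a)
    (hinv2 : ∀ a : S, inv a * a * inv a = inv a)
    (hcomm : ∀ e f : S, e * e = e → f * f = f → e * f = f * e)
    (ρ : Con S) {a b c : S} (h1 : rel inv ρ a b) (h2 : rel inv ρ b c) :
    rel inv ρ a c := by
  obtain ⟨hab, f, hff, hfρ, haf⟩ := h1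
  obtain ⟨hbc, g, hgg, hgρ, hbg⟩ := h2
  refine ⟨ρ.trans hab hbc, f * g, idem_mul hcomm hff hgg, ?_, ?_⟩
  · have hg' : ρ g (inv a * a) :=
      ρ.trans hgρ (ρ.symm (con_invmul inv hinv1 hinv2 hcomm ρ hab))
    have := ρ.mul hfρ hg'
    rwa [idem_ii inv hinv1 a] at this
  · calc a * (f * g) = (a * f) * g := (mul_assoc a f g).symm
      _ = (b * f) * g := by rw [haf]
      _ = b * (g * f) := by rw [mul_assoc, hcomm f g hff hgg]
      _ = (b * g) * f := (mul_assoc b g f).symm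
      _ = (c * g) * f := by rw [hbg]
      _ = c * (f * g) := by rw [mul_assoc, hcomm g f hgg hff]

theorem rel_left (inv : S → S) (hinv1 : ∀ a : S, a * inv a * a = a)
    (hcomm : ∀ e f : S, e * e = e → f * f = f → e * f = f * e)
    (ρ : Con S) {a b : S} (h : rel inv ρ a b) (x : S) :
    rel inv ρ (x * a) (x * b) := by
  obtain ⟨hab, f, hff, hfρ, haf⟩ := h
  have hk := idem_ii inv hinv1 (x * a)
  refine ⟨ρ.mul (ρ.refl x) hab, f * (inv (x * a) * (x * a)),
    idem_mul hcomm hff hk, ?_, ?_⟩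
  · have step : ρ (f * (inv (x * a) * (x * a)))
        ((inv a * a) * (inv (x * a) * (x * a))) :=
      ρ.mul hfρ (ρ.refl _)
    have e1 : (inv a * a) * (inv (x * a) * (x * a)) = inv (x * a) * (x * a) := by
      rw [hcomm _ _ (idem_ii inv hinv1 a) hk]
      calc (inv (x*a) * (x*a)) * (inv a * a)
          = inv (x*a) * (x * ((a * inv a) * a)) := by simp only [mul_assoc]
        _ = inv (x*a) * (x * a) := by rw [hinv1]
    rwa [e1] at step
  · calc (x * a) * (f * (inv (x * a) * (x * a)))
        = (x * (a * f)) * (inv (x * a) * (x * a)) := by simp only [mul_assoc]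
      _ = (x * (b * f)) * (inv (x * a) * (x * a)) := by rw [haf]
      _ = (x * b) * (f * (inv (x * a) * (x * a))) := by simp only [mul_assoc]

theorem rel_right (inv : S → S) (hinv1 : ∀ a : S, a * inv a * a = a)
    (hinv2 : ∀ a : S, inv a * a * inv a = inv a)
    (hcomm : ∀ e f : S, e * e = e → f * f = f → e * f = f * e)
    (ρ : Con S) {a b : S} (h : rel inv ρ a b) (x : S) :
    rel inv ρ (a * x) (b * x) := by
  obtain ⟨hab, f, hff, hfρ, haf⟩ := h
  set k := inv (a * x) * (a * x) with hk_def
  have hk : k * k = k := idem_ii inv hinv1 (a * x)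
  set h0 := inv x * (f * x) with h0_def
  have hh0 : h0 * h0 = h0 := sand_idem inv hinv1 hinv2 hcomm hff x
  set m := inv x * ((inv a * a) * x) with m_def
  have hm : m * m = m := sand_idem inv hinv1 hinv2 hcomm (idem_ii inv hinv1 a) x
  have hρh0m : ρ h0 m := ρ.mul (ρ.refl (inv x)) (ρ.mul hfρ (ρ.refl x))
  have hkm : k * m = k := by
    calc k * m = inv (a*x) * (a * (x * (inv x * ((inv a * a) * x)))) := by
          simp only [hk_def, m_def, mul_assoc]
      _ = inv (a*x) * (a * ((inv a * a) * x)) := by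
          rw [sand_inner inv hinv1 hcomm hinv2 (idem_ii inv hinv1 a) x]
      _ = inv (a*x) * (((a * inv a) * a) * x) := by simp only [mul_assoc]
      _ = k := by rw [hinv1]
  refine ⟨ρ.mul hab (ρ.refl x), h0 * k, idem_mul hcomm hh0 hk, ?_, ?_⟩
  · have step : ρ (h0 * k) (m * k) := ρ.mul hρh0m (ρ.refl k)
    rwa [hcomm m k hm hk, hkm] at step
  · have eA : ∀ c : S, (c * x) * (h0 * k) = ((c * f) * x) * k := by
      intro c
      calc (c * x) * (h0 * k) = (c * (x * h0)) * k := by simp only [mul_assoc]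
        _ = (c * (f * x)) * k := by
            rw [h0_def, sand_inner inv hinv1 hcomm hinv2 hff x]
        _ = ((c * f) * x) * k := by simp only [mul_assoc]
    rw [eA a, eA b, haf]

/-- `rel` as a congruence. -/
def tCon (inv : S → S) (hinv1 : ∀ a : S, a * inv a * a = a)
    (hinv2 : ∀ a : S, inv a * a * inv a = inv a)
    (hcomm : ∀ e f : S, e * e = e → f * f = f → e * f = f * e)
    (ρ : Con S) : Con S where
  r := rel inv ρ
  iseqv := ⟨rel_refl inv hinv1 ρ, rel_symm inv hinv1 hinv2 hcomm ρ,
    rel_trans inv hinv1 hinv2 hcomm ρ⟩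
  mul' := fun {w x y z} h1 h2 =>
    rel_trans inv hinv1 hinv2 hcomm ρ
      (rel_right inv hinv1 hinv2 hcomm ρ h1 y)
      (rel_left inv hinv1 hcomm ρ h2 x)

theorem tCon_tr (inv : S → S) (hinv1 : ∀ a : S, a * inv a * a = a)
    (hinv2 : ∀ a : S, inv a * a * inv a = inv a)
    (hcomm : ∀ e f : S, e * e = e → f * f = f → e * f = f * e)
    (ρ : Con S) : ∀ p q : S, p * p = p → q * q = q →
    ((tCon inv hinv1 hinv2 hcomm ρ) p q ↔ ρ p q) := by
  intro p q hp hq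
  constructor
  · exact fun h => h.1
  · intro h
    refine ⟨h, p * q, idem_mul hcomm hp hq, ?_, ?_⟩
    · have step : ρ (p * q) (p * p) := ρ.mul (ρ.refl p) (ρ.symm h)
      rw [hp] at step
      rwa [idem_inv inv hinv1 hinv2 hcomm hp, hp]
    · calc p * (p * q) = (p * p) * q := (mul_assoc p p q).symm
        _ = p * q := by rw [hp]
        _ = p * (q * q) := by rw [hq]
        _ = (p * q) * q := (mul_assoc p q q).symm
        _ = (q * p) * q := by rw [hcomm q p hq hp]
        _ = q * (p * q) := mul_assoc q p q

end
end Stmt12Aux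



/-- For a congruence `ρ` on an inverse semigroup `S` and an
idempotent `e`, the kernel of the least group congruence `σ` on the inverse
subsemigroup `eρ` equals the `ρ_t`-class of `e`: `ker σ_{eρ} = e ρ_t`.
An element `x ∈ eρ` lies in `ker σ_{eρ}` iff there are an idempotent `g` of
`eρ` and an idempotent `f` of `eρ` with `x * f = g * f`. -/
theorem stmt_12 {S : Type*} [Semigroup S] (inv : S → S)
    (hinv1 : ∀ a : S, a * inv a * a = a)
    (hinv2 : ∀ a : S, inv a * a * inv a = inv a)
    (hcomm : ∀ e f : S, e * e = e → f * f = f → e * f = f * e)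
    (ρ ρt : Con S)
    -- `ρt` is the least congruence on `S` with the same trace as `ρ`
    (hρt_tr : ∀ e f : S, e * e = e → f * f = f → (ρt e f ↔ ρ e f))
    (hρt_least : ∀ c : Con S,
      (∀ e f : S, e * e = e → f * f = f → (c e f ↔ ρ e f)) → ρt ≤ c)
    (e : S) (he : e * e = e) :
    ∀ x : S, ρ x e →
      ((∃ g, ρ g e ∧ g * g = g ∧ ∃ f, ρ f e ∧ f * f = f ∧ x * f = g * f) ↔
        ρt x e) := by
  intro x hxe
  have hxinv : ρ (inv x * x) e := by
    have h1 : ρ (inv x) (inv e) := Stmt12Aux.con_inv inv hinv1 hinv2 hcomm ρ hxe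
    rw [Stmt12Aux.idem_inv inv hinv1 hinv2 hcomm he] at h1
    have h2 : ρ (inv x * x) (e * e) := ρ.mul h1 hxe
    rwa [he] at h2
  constructor
  · rintro ⟨g, hge, hgg, f, hfe, hff, hxf⟩
    have h2 : ρt (inv x * x) f :=
      (hρt_tr _ _ (Stmt12Aux.idem_ii inv hinv1 x) hff).2
        (ρ.trans hxinv (ρ.symm hfe))
    have h3 : ρt x (x * f) := by
      have := ρt.mul (ρt.refl x) h2
      rwa [← mul_assoc x (inv x) x, hinv1] at this
    have h5 : ρt (g * f) g := by
      have h4 : ρt f g := (hρt_tr f g hff hgg).2 (ρ.trans hfe (ρ.symm hge))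
      have := ρt.mul (ρt.refl g) h4
      rwa [hgg] at this
    have h6 : ρt g e := (hρt_tr g e hgg he).2 hge
    refine ρt.trans h3 ?_
    rw [hxf]
    exact ρt.trans h5 h6
  · intro h
    have hle : ρt ≤ Stmt12Aux.tCon inv hinv1 hinv2 hcomm ρ :=
      hρt_least _ (Stmt12Aux.tCon_tr inv hinv1 hinv2 hcomm ρ)
    obtain ⟨-, f, hff, hfρ, hxf⟩ := hle h
    exact ⟨e, ρ.refl e, he, f, ρ.trans hfρ hxinv, hff, hxf⟩
end

section
/- Let ρ be a congruence on an inverse semigroup S such that ρ_t is idempotent pure (ρ_{tk} = ε). Then ρ satisfies the implication: xy = y and x ρ y imply x² = x. -/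
/-- If `ρ_t` is idempotent pure (i.e. `ρ_{tk} = ε`) for a
congruence `ρ` on an inverse semigroup `S`, then `ρ` satisfies the implication
`x * y = y ∧ x ρ y → x² = x`. -/
theorem stmt_13 {S : Type*} [Semigroup S] (inv : S → S)
    (hinv1 : ∀ a : S, a * inv a * a = a)
    (hinv2 : ∀ a : S, inv a * a * inv a = inv a)
    (hcomm : ∀ e f : S, e * e = e → f * f = f → e * f = f * e)
    (ρ ρt : Con S)
    -- `ρt` is the least congruence on `S` with the same trace as `ρ`
    (hρt_tr : ∀ e f : S, e * e = e → f * f = f → (ρt e f ↔ ρ e f))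
    (hρt_least : ∀ c : Con S,
      (∀ e f : S, e * e = e → f * f = f → (c e f ↔ ρ e f)) → ρt ≤ c)
    -- `ρt` is idempotent pure
    (hpure : ∀ x : S, (∃ e, e * e = e ∧ ρt x e) → x * x = x) :
    ∀ x y : S, x * y = y → ρ x y → x * x = x := by
  intro x y hxy hρxy
  set e : S := y * inv y with he
  -- basic identities
  have hee : e * e = e := by
    show (y * inv y) * (y * inv y) = y * inv y
    calc (y * inv y) * (y * inv y) = (y * inv y * y) * inv y := by
          simp [mul_assoc]
      _ = y * inv y := by rw [hinv1]
  have hxe : x * e = e := by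
    show x * (y * inv y) = y * inv y
    rw [← mul_assoc, hxy]
  have hxx' : (x * inv x) * (x * inv x) = x * inv x := by
    calc (x * inv x) * (x * inv x) = (x * inv x * x) * inv x := by
          simp [mul_assoc]
      _ = x * inv x := by rw [hinv1]
  -- e*x is idempotent (since x*e = e)
  have hex_idem : (e * x) * (e * x) = e * x := by
    calc (e * x) * (e * x) = e * (x * e) * x := by simp [mul_assoc]
      _ = e * e * x := by rw [hxe]
      _ = e * x := by rw [hee]
  -- e * (x * inv x) is idempotent
  have hexx'_idem : (e * (x * inv x)) * (e * (x * inv x)) = e * (x * inv x) := by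
    have hc : (x * inv x) * e = e * (x * inv x) := hcomm _ _ hxx' hee
    calc (e * (x * inv x)) * (e * (x * inv x))
        = e * ((x * inv x) * e) * (x * inv x) := by simp [mul_assoc]
      _ = e * (e * (x * inv x)) * (x * inv x) := by rw [hc]
      _ = (e * e) * ((x * inv x) * (x * inv x)) := by simp [mul_assoc]
      _ = e * (x * inv x) := by rw [hee, hxx']
  -- from x ρ y derive (e*x) ρ x
  have h1 : ρ (inv y * x) (inv y * y) := ρ.mul (ρ.refl (inv y)) hρxy
  have h2 : ρ (y * (inv y * x)) (y * (inv y * y)) := ρ.mul (ρ.refl y) h1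
  have h3 : ρ (e * x) y := by
    have : y * (inv y * y) = y := by rw [← mul_assoc, hinv1]
    rw [← mul_assoc] at h2
    rwa [this] at h2
  have h4 : ρ (e * x) x := ρ.trans h3 (ρ.symm hρxy)
  -- multiply on the right by inv x : (e * x * inv x) ρ (x * inv x), both idempotent
  have h5 : ρ (e * (x * inv x)) (x * inv x) := by
    have := ρ.mul h4 (ρ.refl (inv x))
    rwa [mul_assoc] at this
  -- lift to ρt via equal trace
  have h6 : ρt (e * (x * inv x)) (x * inv x) :=
    (hρt_tr _ _ hexx'_idem hxx' ).mpr h5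
  -- multiply by x on the right
  have h7 : ρt ((e * (x * inv x)) * x) ((x * inv x) * x) := ρt.mul h6 (ρt.refl x)
  have h8 : ρt (e * x) x := by
    have l : (e * (x * inv x)) * x = e * x := by
      rw [mul_assoc]; rw [hinv1]
    have r : (x * inv x) * x = x := hinv1 x
    rwa [l, r] at h7
  exact hpure x ⟨e * x, hex_idem, ρt.symm h8⟩
end

section
/- Let ρ be a congruence on an inverse semigroup S satisfying the implication: xy = y and x ρ y imply x² = x. Then ρ_t is idempotent pure, i.e., ker ρ_t = E_S. -/
set_option linter.unusedSectionVars false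
set_option linter.unusedVariables false

section
variable {S : Type*} [Semigroup S]

private lemma t14_idem_mul (hcomm : ∀ e f : S, e*e=e → f*f=f → e*f = f*e)
    {e f : S} (he : e*e=e) (hf : f*f=f) : (e*f)*(e*f) = e*f := by
  calc (e*f)*(e*f) = e*((f*e)*f) := by simp only [mul_assoc]
    _ = e*((e*f)*f) := by rw [hcomm f e hf he]
    _ = (e*e)*(f*f) := by simp only [mul_assoc]
    _ = e*f := by rw [he, hf]

private lemma t14_inv_unique (hcomm : ∀ e f : S, e*e=e → f*f=f → e*f = f*e)
    {a x y : S}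
    (h1 : a*x*a = a) (h2 : x*a*x = x) (h3 : a*y*a = a) (h4 : y*a*y = y) : x = y := by
  have hxa : (x*a)*(x*a) = x*a := by
    calc (x*a)*(x*a) = x*(a*x*a) := by simp only [mul_assoc]
      _ = x*a := by rw [h1]
  have hya : (y*a)*(y*a) = y*a := by
    calc (y*a)*(y*a) = y*(a*y*a) := by simp only [mul_assoc]
      _ = y*a := by rw [h3]
  have hax : (a*x)*(a*x) = a*x := by
    calc (a*x)*(a*x) = (a*x*a)*x := by simp only [mul_assoc]
      _ = a*x := by rw [h1]
  have hay : (a*y)*(a*y) = a*y := by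
    calc (a*y)*(a*y) = (a*y*a)*y := by simp only [mul_assoc]
      _ = a*y := by rw [h3]
  have e1 : x = y*a*x := by
    calc x = x*a*x := h2.symm
      _ = x*(a*y*a)*x := by rw [h3]
      _ = ((x*a)*(y*a))*x := by simp only [mul_assoc]
      _ = ((y*a)*(x*a))*x := by rw [hcomm (x*a) (y*a) hxa hya]
      _ = (y*a)*(x*a*x) := by simp only [mul_assoc]
      _ = y*a*x := by rw [h2]
  have e2 : y = y*a*x := by
    calc y = y*a*y := h4.symm
      _ = y*(a*x*a)*y := by rw [h1]
      _ = y*((a*x)*(a*y)) := by simp only [mul_assoc]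
      _ = y*((a*y)*(a*x)) := by rw [hcomm (a*x) (a*y) hax hay]
      _ = (y*a*y)*(a*x) := by simp only [mul_assoc]
      _ = y*(a*x) := by rw [h4]
      _ = y*a*x := by rw [mul_assoc]
  rw [e1, ← e2]

variable (inv : S → S)

private lemma t14_ia_idem (hinv1 : ∀ a : S, a * inv a * a = a) (a : S) :
    (inv a * a) * (inv a * a) = inv a * a := by
  calc (inv a * a) * (inv a * a) = inv a * (a * inv a * a) := by simp only [mul_assoc]
    _ = inv a * a := by rw [hinv1]

private lemma t14_ai_idem (hinv1 : ∀ a : S, a * inv a * a = a) (a : S) :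
    (a * inv a) * (a * inv a) = a * inv a := by
  calc (a * inv a) * (a * inv a) = (a * inv a * a) * inv a := by simp only [mul_assoc]
    _ = a * inv a := by rw [hinv1]

private lemma t14_inv_idem (hinv1 : ∀ a : S, a * inv a * a = a)
    (hinv2 : ∀ a : S, inv a * a * inv a = inv a)
    (hcomm : ∀ e f : S, e*e=e → f*f=f → e*f = f*e)
    {e : S} (he : e*e = e) : inv e = e := by
  refine t14_inv_unique hcomm (hinv1 e) (hinv2 e) ?_ ?_ <;>
    · show e*e*e = e; rw [he, he]

private lemma t14_inv_mul (hinv1 : ∀ a : S, a * inv a * a = a)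
    (hinv2 : ∀ a : S, inv a * a * inv a = inv a)
    (hcomm : ∀ e f : S, e*e=e → f*f=f → e*f = f*e)
    (a b : S) : inv (a*b) = inv b * inv a := by
  refine t14_inv_unique hcomm (hinv1 (a*b)) (hinv2 (a*b)) ?_ ?_
  · -- (a*b) * (inv b * inv a) * (a*b) = a*b
    calc (a*b) * (inv b * inv a) * (a*b)
        = a * ((b * inv b) * (inv a * a)) * b := by simp only [mul_assoc]
      _ = a * ((inv a * a) * (b * inv b)) * b := by
          rw [hcomm (b*inv b) (inv a*a) (t14_ai_idem inv hinv1 b) (t14_ia_idem inv hinv1 a)]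
      _ = (a * inv a * a) * (b * inv b * b) := by simp only [mul_assoc]
      _ = a * b := by rw [hinv1, hinv1]
  · calc (inv b * inv a) * (a*b) * (inv b * inv a)
        = inv b * ((inv a * a) * (b * inv b)) * inv a := by simp only [mul_assoc]
      _ = inv b * ((b * inv b) * (inv a * a)) * inv a := by
          rw [hcomm (inv a*a) (b*inv b) (t14_ia_idem inv hinv1 a) (t14_ai_idem inv hinv1 b)]
      _ = (inv b * b * inv b) * (inv a * a * inv a) := by simp only [mul_assoc]
      _ = inv b * inv a := by rw [hinv2, hinv2]


variable (ρ : Con S)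

private def t14_r (a b : S) : Prop :=
  ∃ f : S, f*f = f ∧ a*f = b*f ∧ ρ f (inv a * a) ∧ ρ f (inv b * b)

variable (hinv1 : ∀ a : S, a * inv a * a = a)
    (hinv2 : ∀ a : S, inv a * a * inv a = inv a)
    (hcomm : ∀ e f : S, e*e=e → f*f=f → e*f = f*e)

include hinv1 hinv2 hcomm

private lemma t14_refl (a : S) : t14_r inv ρ a a :=
  ⟨inv a * a, t14_ia_idem inv hinv1 a, rfl, ρ.refl _, ρ.refl _⟩

private lemma t14_symm {a b : S} (h : t14_r inv ρ a b) : t14_r inv ρ b a := by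
  obtain ⟨f, hf, hab, h1, h2⟩ := h
  exact ⟨f, hf, hab.symm, h2, h1⟩

private lemma t14_trans {a b c : S} (h : t14_r inv ρ a b) (h' : t14_r inv ρ b c) :
    t14_r inv ρ a c := by
  obtain ⟨e, he, hab, ha, hb⟩ := h
  obtain ⟨f, hf, hbc, hb', hc⟩ := h'
  have hef : ρ e f := ρ.trans hb (ρ.symm hb')
  refine ⟨e*f, t14_idem_mul hcomm he hf, ?_, ?_, ?_⟩
  · calc a*(e*f) = (a*e)*f := by rw [mul_assoc]
      _ = (b*e)*f := by rw [hab]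
      _ = b*(e*f) := by rw [mul_assoc]
      _ = b*(f*e) := by rw [hcomm e f he hf]
      _ = (b*f)*e := by rw [mul_assoc]
      _ = (c*f)*e := by rw [hbc]
      _ = c*(f*e) := by rw [mul_assoc]
      _ = c*(e*f) := by rw [hcomm e f he hf]
  · have h1 : ρ (e*f) (e*e) := ρ.mul (ρ.refl e) (ρ.symm hef)
    rw [he] at h1
    exact ρ.trans h1 ha
  · have h1 : ρ (e*f) (f*f) := ρ.mul hef (ρ.refl f)
    rw [hf] at h1
    exact ρ.trans h1 hc

private lemma t14_right {a b : S} (s : S) (h : t14_r inv ρ a b) :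
    t14_r inv ρ (a*s) (b*s) := by
  obtain ⟨e, he, hab, ha, hb⟩ := h
  have hss : (s * inv s) * (s * inv s) = s * inv s := t14_ai_idem inv hinv1 s
  refine ⟨inv s * e * s, ?_, ?_, ?_, ?_⟩
  · calc (inv s * e * s) * (inv s * e * s)
        = inv s * ((e * (s * inv s)) * (e * s)) := by simp only [mul_assoc]
      _ = inv s * (((s * inv s) * e) * (e * s)) := by rw [hcomm e (s*inv s) he hss]
      _ = inv s * (s * (inv s * ((e * e) * s))) := by simp only [mul_assoc]
      _ = inv s * (s * (inv s * (e * s))) := by rw [he]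
      _ = (inv s * s * inv s) * (e * s) := by simp only [mul_assoc]
      _ = inv s * e * s := by rw [hinv2, ← mul_assoc]
  · have key : ∀ x : S, (x*s)*(inv s * e * s) = (x*e)*s := by
      intro x
      calc (x*s)*(inv s * e * s)
          = x*(((s * inv s) * e) * s) := by simp only [mul_assoc]
        _ = x*((e * (s * inv s)) * s) := by rw [hcomm (s*inv s) e hss he]
        _ = (x*e)*(s * inv s * s) := by simp only [mul_assoc]
        _ = (x*e)*s := by rw [hinv1]
    rw [key a, key b, hab]
  · have h1 : ρ (inv s * e * s) (inv s * (inv a * a) * s) :=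
      ρ.mul (ρ.mul (ρ.refl (inv s)) ha) (ρ.refl s)
    have h2 : inv (a*s) * (a*s) = inv s * (inv a * a) * s := by
      rw [t14_inv_mul inv hinv1 hinv2 hcomm a s]; simp only [mul_assoc]
    rw [h2]; exact h1
  · have h1 : ρ (inv s * e * s) (inv s * (inv b * b) * s) :=
      ρ.mul (ρ.mul (ρ.refl (inv s)) hb) (ρ.refl s)
    have h2 : inv (b*s) * (b*s) = inv s * (inv b * b) * s := by
      rw [t14_inv_mul inv hinv1 hinv2 hcomm b s]; simp only [mul_assoc]
    rw [h2]; exact h1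

private lemma t14_left {a b : S} (s : S) (h : t14_r inv ρ a b) :
    t14_r inv ρ (s*a) (s*b) := by
  obtain ⟨e, he, hab, ha, hb⟩ := h
  set ka := inv (s*a) * (s*a) with hka_def
  set kb := inv (s*b) * (s*b) with hkb_def
  have hka : ka * ka = ka := t14_ia_idem inv hinv1 (s*a)
  have hkb : kb * kb = kb := t14_ia_idem inv hinv1 (s*b)
  -- key equality : e * ka = e * kb
  have expand : ∀ x : S, inv (s*x*e) * (s*x*e) = e * (inv (s*x) * (s*x)) := by
    intro x
    calc inv (s*x*e) * (s*x*e)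
        = (inv e * inv (s*x)) * (s*x*e) := by rw [t14_inv_mul inv hinv1 hinv2 hcomm (s*x) e]
      _ = (e * inv (s*x)) * (s*x*e) := by rw [t14_inv_idem inv hinv1 hinv2 hcomm he]
      _ = e * ((inv (s*x) * (s*x)) * e) := by simp only [mul_assoc]
      _ = e * (e * (inv (s*x) * (s*x))) := by
          rw [hcomm (inv (s*x) * (s*x)) e (t14_ia_idem inv hinv1 (s*x)) he]
      _ = (e*e) * (inv (s*x) * (s*x)) := by simp only [mul_assoc]
      _ = e * (inv (s*x) * (s*x)) := by rw [he]
  have hme : s*a*e = s*b*e := by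
    calc s*a*e = s*(a*e) := by rw [mul_assoc]
      _ = s*(b*e) := by rw [hab]
      _ = s*b*e := by rw [mul_assoc]
  have key : e * ka = e * kb := by
    rw [hka_def, hkb_def, ← expand a, ← expand b, hme]
  refine ⟨e * ka, t14_idem_mul hcomm he hka, ?_, ?_, ?_⟩
  · calc (s*a)*(e*ka) = (s*(a*e))*ka := by simp only [mul_assoc]
      _ = (s*(b*e))*ka := by rw [hab]
      _ = (s*b)*(e*ka) := by simp only [mul_assoc]
  · have habs : (inv a * a) * ka = ka := by
      rw [hka_def, t14_inv_mul inv hinv1 hinv2 hcomm s a]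
      calc (inv a * a) * ((inv a * inv s) * (s*a))
          = (inv a * a * inv a) * (inv s * (s*a)) := by simp only [mul_assoc]
        _ = inv a * (inv s * (s*a)) := by rw [hinv2]
        _ = (inv a * inv s) * (s*a) := by simp only [mul_assoc]
    have h1 : ρ (e * ka) ((inv a * a) * ka) := ρ.mul ha (ρ.refl ka)
    rw [habs] at h1
    exact h1
  · have habs : (inv b * b) * kb = kb := by
      rw [hkb_def, t14_inv_mul inv hinv1 hinv2 hcomm s b]
      calc (inv b * b) * ((inv b * inv s) * (s*b))
          = (inv b * b * inv b) * (inv s * (s*b)) := by simp only [mul_assoc]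
        _ = inv b * (inv s * (s*b)) := by rw [hinv2]
        _ = (inv b * inv s) * (s*b) := by simp only [mul_assoc]
    have h1 : ρ (e * kb) ((inv b * b) * kb) := ρ.mul hb (ρ.refl kb)
    rw [habs] at h1
    rw [key]
    exact h1

private def t14_con : Con S where
  r := t14_r inv ρ
  iseqv := ⟨t14_refl inv ρ hinv1 hinv2 hcomm,
    fun h => t14_symm inv ρ hinv1 hinv2 hcomm h,
    fun h h' => t14_trans inv ρ hinv1 hinv2 hcomm h h'⟩
  mul' := by
    intro w x y z h h'
    exact t14_trans inv ρ hinv1 hinv2 hcomm (t14_right inv ρ hinv1 hinv2 hcomm y h)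
      (t14_left inv ρ hinv1 hinv2 hcomm x h')

private lemma t14_con_iff (a b : S) :
    (t14_con inv ρ hinv1 hinv2 hcomm) a b ↔ t14_r inv ρ a b := Iff.rfl

end



/-- If a congruence `ρ` on an inverse semigroup `S` satisfies the
implication `x * y = y ∧ x ρ y → x² = x`, then `ρ_t` is idempotent pure:
`ker ρ_t = E_S`. -/
theorem stmt_14 {S : Type*} [Semigroup S] (inv : S → S)
    (hinv1 : ∀ a : S, a * inv a * a = a)
    (hinv2 : ∀ a : S, inv a * a * inv a = inv a)
    (hcomm : ∀ e f : S, e * e = e → f * f = f → e * f = f * e)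
    (ρ ρt : Con S)
    -- `ρt` is the least congruence on `S` with the same trace as `ρ`
    (hρt_tr : ∀ e f : S, e * e = e → f * f = f → (ρt e f ↔ ρ e f))
    (hρt_least : ∀ c : Con S,
      (∀ e f : S, e * e = e → f * f = f → (c e f ↔ ρ e f)) → ρt ≤ c)
    (himp : ∀ x y : S, x * y = y → ρ x y → x * x = x) :
    ∀ x : S, (∃ e, e * e = e ∧ ρt x e) → x * x = x := by
  intro x ⟨e, he, hxe⟩
  let c : Con S := t14_con inv ρ hinv1 hinv2 hcomm
  have hciff : ∀ a b : S, c a b ↔ t14_r inv ρ a b :=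
    t14_con_iff inv ρ hinv1 hinv2 hcomm
  have hinv_e : ∀ {g : S}, g*g = g → inv g * g = g := by
    intro g hg
    rw [t14_inv_idem inv hinv1 hinv2 hcomm hg, hg]
  have htrace : ∀ e f : S, e * e = e → f * f = f → (c e f ↔ ρ e f) := by
    intro e f he hf
    constructor
    · intro hcf
      obtain ⟨g, hg, hefg, h1, h2⟩ := (hciff e f).mp hcf
      rw [hinv_e he] at h1
      rw [hinv_e hf] at h2
      exact ρ.trans (ρ.symm h1) h2
    · intro h
      rw [hciff e f]
      refine ⟨e*f, t14_idem_mul hcomm he hf, ?_, ?_, ?_⟩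
      · calc e*(e*f) = (e*e)*f := by rw [mul_assoc]
          _ = e*f := by rw [he]
          _ = e*(f*f) := by rw [hf]
          _ = (e*f)*f := by rw [mul_assoc]
          _ = (f*e)*f := by rw [hcomm e f he hf]
          _ = f*(e*f) := by rw [mul_assoc]
      · rw [hinv_e he]
        have h1 : ρ (e*f) (e*e) := ρ.mul (ρ.refl e) (ρ.symm h)
        rw [he] at h1; exact h1
      · rw [hinv_e hf]
        have h1 : ρ (e*f) (f*f) := ρ.mul h (ρ.refl f)
        rw [hf] at h1; exact h1
  have hle := hρt_least c htrace
  have hcxe : t14_r inv ρ x e := (hciff x e).mp (hle hxe)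
  obtain ⟨f, hf, hxf, h1, h2⟩ := hcxe
  rw [hinv_e he] at h2
  -- g := e*f ; x * g = g and ρ x g
  have hxg : x * (e*f) = e*f := by
    calc x*(e*f) = x*(f*e) := by rw [hcomm e f he hf]
      _ = (x*f)*e := by rw [mul_assoc]
      _ = (e*f)*e := by rw [hxf]
      _ = (f*e)*e := by rw [hcomm e f he hf]
      _ = f*(e*e) := by rw [mul_assoc]
      _ = f*e := by rw [he]
      _ = e*f := by rw [hcomm e f he hf]
  have hρxg : ρ x (e*f) := by
    have h3 : ρ (x*f) (x*(inv x * x)) := ρ.mul (ρ.refl x) h1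
    have h4 : x*(inv x * x) = x := by rw [← mul_assoc, hinv1]
    rw [h4, hxf] at h3
    exact ρ.symm h3
  exact himp x (e*f) hxg hρxg
end

section
/- Let ρ be a congruence on an inverse semigroup S such that every idempotent ρ-class eρ is an E-unitary inverse semigroup. Then ρ satisfies the implication: xy = y and x ρ y imply x² = x. -/
/-- Uniqueness of inverses in a semigroup in which idempotents commute. -/
theorem uniq_inv {M : Type*} [Semigroup M]
    (comm : ∀ e f : M, e * e = e → f * f = f → e * f = f * e)
    {a u v : M} (h1 : a * u * a = a) (h2 : u * a * u = u)
    (h3 : a * v * a = a) (h4 : v * a * v = v) : u = v := by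
  have hua : (u * a) * (u * a) = u * a := by rw [mul_assoc, ← mul_assoc a u a, h1]
  have hva : (v * a) * (v * a) = v * a := by rw [mul_assoc, ← mul_assoc a v a, h3]
  have hau : (a * u) * (a * u) = a * u := by rw [mul_assoc, ← mul_assoc u a u, h2]
  have hav : (a * v) * (a * v) = a * v := by rw [mul_assoc, ← mul_assoc v a v, h4]
  have cu : u = v * (a * u) := by
    calc u = u * a * u := h2.symm
      _ = u * (a * v * a) * u := by rw [h3]
      _ = (u * a) * (v * a) * u := by simp only [mul_assoc]
      _ = (v * a) * (u * a) * u := by rw [comm (u * a) (v * a) hua hva]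
      _ = v * (a * (u * a * u)) := by simp only [mul_assoc]
      _ = v * (a * u) := by rw [h2]
  have cv : v = v * (a * u) := by
    calc v = v * a * v := h4.symm
      _ = v * (a * u * a) * v := by rw [h1]
      _ = v * ((a * u) * (a * v)) := by simp only [mul_assoc]
      _ = v * ((a * v) * (a * u)) := by rw [comm (a * u) (a * v) hau hav]
      _ = (v * a * v) * (a * u) := by simp only [mul_assoc]
      _ = v * (a * u) := by rw [h4]
  exact cu.trans cv.symm

section Aux

variable {S : Type*} [Semigroup S] (inv : S → S)
    (hinv1 : ∀ a : S, a * inv a * a = a)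
    (hinv2 : ∀ a : S, inv a * a * inv a = inv a)
    (hcomm : ∀ e f : S, e * e = e → f * f = f → e * f = f * e)

include hinv1 hinv2 hcomm

theorem aux_idemR (a : S) : (a * inv a) * (a * inv a) = a * inv a := by
  calc (a * inv a) * (a * inv a) = (a * inv a * a) * inv a := by simp only [mul_assoc]
    _ = a * inv a := by rw [hinv1]

theorem aux_idemL (a : S) : (inv a * a) * (inv a * a) = inv a * a := by
  calc (inv a * a) * (inv a * a) = (inv a * a * inv a) * a := by simp only [mul_assoc]
    _ = inv a * a := by rw [hinv2]

theorem aux_invIdem {e : S} (he : e * e = e) : inv e = e := by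
  refine uniq_inv hcomm (a := e) (hinv1 e) (hinv2 e) ?_ ?_ <;> rw [he, he]

theorem aux_invInv (a : S) : inv (inv a) = a :=
  uniq_inv hcomm (a := inv a) (hinv1 (inv a)) (hinv2 (inv a)) (hinv2 a) (hinv1 a)

theorem aux_invMul (a b : S) : inv (a * b) = inv b * inv a := by
  refine uniq_inv hcomm (a := a * b) (hinv1 _) (hinv2 _) ?_ ?_
  · calc (a * b) * (inv b * inv a) * (a * b)
        = a * ((b * inv b) * (inv a * a)) * b := by simp only [mul_assoc]
      _ = a * ((inv a * a) * (b * inv b)) * b := by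
          rw [hcomm (b * inv b) (inv a * a) (aux_idemR inv hinv1 hinv2 hcomm b)
            (aux_idemL inv hinv1 hinv2 hcomm a)]
      _ = (a * inv a * a) * (b * inv b * b) := by simp only [mul_assoc]
      _ = a * b := by rw [hinv1, hinv1]
  · calc (inv b * inv a) * (a * b) * (inv b * inv a)
        = inv b * ((inv a * a) * (b * inv b)) * inv a := by simp only [mul_assoc]
      _ = inv b * ((b * inv b) * (inv a * a)) * inv a := by
          rw [hcomm (b * inv b) (inv a * a) (aux_idemR inv hinv1 hinv2 hcomm b)
            (aux_idemL inv hinv1 hinv2 hcomm a)]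
      _ = (inv b * b * inv b) * (inv a * a * inv a) := by simp only [mul_assoc]
      _ = inv b * inv a := by rw [hinv2, hinv2]

variable (ρ : Con S)

/-- Lallement's lemma. -/
theorem aux_lall {x : S} (h : ρ x (x * x)) : ∃ e : S, e * e = e ∧ ρ e x := by
  refine ⟨x * inv (x * x) * x, ?_, ?_⟩
  · calc (x * inv (x * x) * x) * (x * inv (x * x) * x)
        = x * (inv (x * x) * (x * x) * inv (x * x)) * x := by simp only [mul_assoc]
      _ = x * inv (x * x) * x := by rw [hinv2 (x * x)]
  · have h1 : ρ (x * inv (x * x) * x) ((x * x) * inv (x * x) * x) :=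
      ρ.mul (ρ.mul h (ρ.refl _)) (ρ.refl x)
    have h2 : ρ ((x * x) * inv (x * x) * x) ((x * x) * inv (x * x) * (x * x)) :=
      ρ.mul (ρ.refl _) h
    have h3 : ρ ((x * x) * inv (x * x) * (x * x)) x := by
      rw [hinv1 (x * x)]; exact ρ.symm h
    exact ρ.trans h1 (ρ.trans h2 h3)

/-- Idempotents commute in the quotient. -/
theorem aux_qcomm : ∀ A B : ρ.Quotient, A * A = A → B * B = B → A * B = B * A := by
  intro A B
  refine Con.induction_on₂ A B ?_
  intro a b hA hB
  have ha : ρ a (a * a) := ρ.symm ((Con.eq ρ).mp (by rw [Con.coe_mul]; exact hA))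
  have hb : ρ b (b * b) := ρ.symm ((Con.eq ρ).mp (by rw [Con.coe_mul]; exact hB))
  obtain ⟨e, he, hea⟩ := aux_lall inv hinv1 hinv2 hcomm ρ ha
  obtain ⟨f, hf, hfb⟩ := aux_lall inv hinv1 hinv2 hcomm ρ hb
  have key : ρ (a * b) (b * a) := by
    have t1 : ρ (a * b) (f * e) := by
      rw [← hcomm e f he hf]; exact ρ.mul (ρ.symm hea) (ρ.symm hfb)
    exact ρ.trans t1 (ρ.mul hfb hea)
  show (↑(a * b) : ρ.Quotient) = ↑(b * a)
  exact (Con.eq ρ).mpr key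

/-- A congruence on an inverse semigroup is compatible with inversion. -/
theorem aux_rInv {a b : S} (hab : ρ a b) : ρ (inv a) (inv b) := by
  have hq : (a : ρ.Quotient) = b := (Con.eq ρ).mpr hab
  have key : (↑(inv a) : ρ.Quotient) = ↑(inv b) := by
    refine uniq_inv (aux_qcomm inv hinv1 hinv2 hcomm ρ) (a := (a : ρ.Quotient)) ?_ ?_ ?_ ?_
    · rw [← Con.coe_mul, ← Con.coe_mul, hinv1]
    · rw [← Con.coe_mul, ← Con.coe_mul, hinv2]
    · rw [hq, ← Con.coe_mul, ← Con.coe_mul, hinv1]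
    · rw [hq, ← Con.coe_mul, ← Con.coe_mul, hinv2]
  exact (Con.eq ρ).mp key

end Aux

/-- If every idempotent `ρ`-class of a congruence `ρ` on an
inverse semigroup is an `E`-unitary inverse semigroup, then `ρ` satisfies the
implication `x * y = y ∧ x ρ y → x² = x`. -/
theorem stmt_15 {S : Type*} [Semigroup S] (inv : S → S)
    (hinv1 : ∀ a : S, a * inv a * a = a)
    (hinv2 : ∀ a : S, inv a * a * inv a = inv a)
    (hcomm : ∀ e f : S, e * e = e → f * f = f → e * f = f * e)
    (ρ : Con S)
    -- every idempotent `ρ`-class `eρ` is `E`-unitary: if `f` is an idempotent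
    -- of `eρ`, `y ∈ eρ` and `f * y = f`, then `y` is idempotent
    (hEu : ∀ e : S, e * e = e →
      ∀ f y : S, ρ f e → f * f = f → ρ y e → f * y = f → y * y = y) :
    ∀ x y : S, x * y = y → ρ x y → x * x = x := by
  intro x y hxy hρ
  have hxx : ρ x (x * x) := by
    have h1 : ρ (x * x) y := by rw [← hxy]; exact ρ.mul (ρ.refl x) hρ
    exact ρ.symm (ρ.trans h1 (ρ.symm hρ))
  obtain ⟨e, he, hex⟩ := aux_lall inv hinv1 hinv2 hcomm ρ hxx
  have hxe : ρ x e := ρ.symm hex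
  have hinvxe : ρ (inv x) e := by
    have h := aux_rInv inv hinv1 hinv2 hcomm ρ hxe
    rwa [aux_invIdem inv hinv1 hinv2 hcomm he] at h
  have hye : ρ y e := ρ.trans (ρ.symm hρ) hxe
  have hinvye : ρ (inv y) e := by
    have h := aux_rInv inv hinv1 hinv2 hcomm ρ hye
    rwa [aux_invIdem inv hinv1 hinv2 hcomm he] at h
  have hge : ρ (y * inv y) e := by
    have h := ρ.mul hye hinvye
    rwa [he] at h
  have hg : (y * inv y) * (y * inv y) = y * inv y := aux_idemR inv hinv1 hinv2 hcomm y
  have hinvy : inv y = inv y * inv x := by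
    conv_lhs => rw [← hxy]
    exact aux_invMul inv hinv1 hinv2 hcomm x y
  have hgx : (y * inv y) * inv x = y * inv y := by rw [mul_assoc, ← hinvy]
  have happ : inv x * inv x = inv x := hEu e he (y * inv y) (inv x) hge hg hinvxe hgx
  have h5 : inv (inv x) = x := aux_invInv inv hinv1 hinv2 hcomm x
  have h6 : inv (inv x) = inv x := aux_invIdem inv hinv1 hinv2 hcomm happ
  have hx : x = inv x := h5.symm.trans h6
  rw [hx]; exact happ
end

section
/- A congruence ρ on a regular semigroup S is idempotent separating (distinct idempotents are never ρ-related) if and only if ρ_t = ε, where ρ_t is the least congruence with the same trace as ρ and ε is the equality relation. -/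
/-- A congruence `ρ` on a regular semigroup is idempotent
separating iff `ρ_t = ε`, the equality relation, where `ρ_t` is the least
congruence with the same trace as `ρ`. -/
theorem stmt_19 {S : Type*} [Semigroup S]
    (hreg : ∀ a : S, ∃ a', a * a' * a = a ∧ a' * a * a' = a')
    (ρ ρt : Con S)
    (hρt_tr : ∀ e f : S, e * e = e → f * f = f → (ρt e f ↔ ρ e f))
    (hρt_least : ∀ c : Con S,
      (∀ e f : S, e * e = e → f * f = f → (c e f ↔ ρ e f)) → ρt ≤ c) :
    (∀ e f : S, e * e = e → f * f = f → ρ e f → e = f) ↔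
      (∀ x y : S, ρt x y ↔ x = y) := by
  constructor
  · intro hsep x y
    constructor
    · intro hxy
      let c : Con S := ⟨⟨Eq, eq_equivalence⟩, fun h1 h2 => h1 ▸ h2 ▸ rfl⟩
      have hle := hρt_least c (fun e f he hf =>
        ⟨fun h => h ▸ ρ.refl e, fun h => hsep e f he hf h⟩)
      exact hle hxy
    · rintro rfl; exact ρt.refl x
  · intro hε e f he hf hρ
    exact (hε e f).mp ((hρt_tr e f he hf).mpr hρ)
end
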